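/- In the Diaconis–Fulton representation, if α and β are two τ-legal toppling sequences contained in a finite set U that both stabilize a configuration η in U, then their odometers agree, m_α = m_β, and they produce the same final configuration (Abelian property). -/

import Mathlib

/-- The state of a site: `act m` means `m` active particles, `sleep` means one
sleeping particle. -/
inductive SiteState : Type
  | act : ℕ → SiteState
  | sleep : SiteState
deriving DecidableEq

/-- The rank of a site state for the total order `0 < 𝔰 < 1 < 2 < ⋯`. -/
def SiteState.rank : SiteState → ℕ
  | .act 0 => 0
  | .sleep => 1
  | .act (n + 1) => n + 2

/-- A toppling instruction: either a sleep instruction or a jump instruction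
towards a vertex. -/
inductive Instr (V : Type*) : Type _
  | sleep : Instr V
  | jump : V → Instr V

variable {V : Type*} [DecidableEq V]

/-- Removing one particle from a site (with the convention `𝔰 − 1 = 0`). -/
def SiteState.dec : SiteState → SiteState
  | .act (n + 1) => .act n
  | .act 0 => .act 0
  | .sleep => .act 0

/-- Adding one (active) particle to a site: a sleeping particle is woken up. -/
def SiteState.inc : SiteState → SiteState
  | .act n => .act (n + 1)
  | .sleep => .act 2

/-- The effect of an instruction performed at site `x` on the configuration `η`:
a sleep instruction puts a lone active particle at `x` to sleep, a jump
instruction moves one particle from `x` to its target. -/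
def applyInstr (ins : Instr V) (x : V) (η : V → SiteState) : V → SiteState :=
  match ins with
  | .sleep => if η x = .act 1 then Function.update η x .sleep else η
  | .jump y =>
      let η' := Function.update η x (SiteState.dec (η x))
      Function.update η' y (SiteState.inc (η' y))

/-- Toppling the site `x`: apply the next unused instruction of the stack at `x`
and increment the odometer there. -/
def topple (τ : V → ℕ → Instr V) (x : V) (s : (V → SiteState) × (V → ℕ)) :
    (V → SiteState) × (V → ℕ) :=
  (applyInstr (τ x (s.2 x)) x s.1, Function.update s.2 x (s.2 x + 1))

/-- Running a sequence of topplings. -/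
def runSeq (τ : V → ℕ → Instr V) : List V → ((V → SiteState) × (V → ℕ)) →
    (V → SiteState) × (V → ℕ)
  | [], s => s
  | x :: α, s => runSeq τ α (topple τ x s)

/-- A toppling sequence is legal if each toppling happens at a currently
unstable site (a site holding at least one active particle). -/
def LegalSeq (τ : V → ℕ → Instr V) : List V → ((V → SiteState) × (V → ℕ)) → Prop
  | [], _ => True
  | x :: α, s => 2 ≤ (s.1 x).rank ∧ LegalSeq τ α (topple τ x s)

/-- A toppling sequence is acceptable if each toppling happens at a currently
occupied site (holding at least a sleeping particle). -/
def AcceptableSeq (τ : V → ℕ → Instr V) : List V → ((V → SiteState) × (V → ℕ)) → Prop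
  | [], _ => True
  | x :: α, s => 1 ≤ (s.1 x).rank ∧ AcceptableSeq τ α (topple τ x s)

/-- A configuration is stable in `U` if every site of `U` holds either no particle
or one sleeping particle. -/
def StableIn (U : Set V) (η : V → SiteState) : Prop :=
  ∀ x ∈ U, (η x).rank ≤ 1

/-!
Topplings at two distinct unstable sites commute, and a site stays unstable until it is toppled
itself. So if `z :: α` is legal and the legal sequence `β` stabilizes a set containing `z`, then
`z` occurs in `β`, and its first occurrence can be moved to the front of `β` without affecting
legality or the outcome. Induction on `α` gives that `α` is a sub-multiset of `β` (least action
principle), hence `α` and `β` are permutations of each other when both stabilize; the same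
exchange argument shows that legal permutations of each other end in the same state.
-/

namespace SiteState

lemma two_le_rank_iff {s : SiteState} : 2 ≤ s.rank ↔ ∃ n, s = .act (n + 1) := by
  cases s with
  | act n => cases n <;> simp [rank]
  | sleep => simp [rank]

end SiteState

lemma applyInstr_sleep_apply (x z : V) (η : V → SiteState) :
    applyInstr .sleep x η z =
      if η x = .act 1 then (if z = x then .sleep else η z) else η z := by
  simp only [applyInstr]
  split_ifs <;> simp_all

lemma applyInstr_jump_apply (x u z : V) (η : V → SiteState) :
    applyInstr (.jump u) x η z =
      if z = u then SiteState.inc (if u = x then SiteState.dec (η x) else η u)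
      else if z = x then SiteState.dec (η x) else η z := by
  simp only [applyInstr, Function.update_apply]

set_option maxHeartbeats 1000000 in
lemma applyInstr_comm {x y : V} (hxy : x ≠ y) (i j : Instr V) {η : V → SiteState}
    (hx : 2 ≤ (η x).rank) (hy : 2 ≤ (η y).rank) :
    applyInstr j y (applyInstr i x η) = applyInstr i x (applyInstr j y η) := by
  obtain ⟨a, ha⟩ := SiteState.two_le_rank_iff.mp hx
  obtain ⟨b, hb⟩ := SiteState.two_le_rank_iff.mp hy
  funext z
  cases i <;> cases j <;>
    simp only [applyInstr_sleep_apply, applyInstr_jump_apply] <;>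
    split_ifs <;> subst_vars <;> simp_all [SiteState.inc, SiteState.dec]

lemma two_le_rank_applyInstr_of_ne {x y : V} (hxy : x ≠ y) (i : Instr V) {η : V → SiteState}
    (h : 2 ≤ (η x).rank) : 2 ≤ (applyInstr i y η x).rank := by
  obtain ⟨n, hn⟩ := SiteState.two_le_rank_iff.mp h
  refine SiteState.two_le_rank_iff.mpr ?_
  cases i with
  | sleep => exact ⟨n, by rw [applyInstr_sleep_apply]; split_ifs <;> simp_all⟩
  | jump u =>
      rw [applyInstr_jump_apply]
      by_cases hxu : x = u
      · subst hxu; simp [hxy, hn, SiteState.inc]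
      · simp [hxu, hxy, hn]

lemma topple_comm (τ : V → ℕ → Instr V) {x y : V} (hxy : x ≠ y)
    {s : (V → SiteState) × (V → ℕ)} (hx : 2 ≤ (s.1 x).rank) (hy : 2 ≤ (s.1 y).rank) :
    topple τ y (topple τ x s) = topple τ x (topple τ y s) := by
  simp only [topple, Function.update_of_ne hxy, Function.update_of_ne hxy.symm,
    applyInstr_comm hxy _ _ hx hy, Function.update_comm hxy]

lemma two_le_rank_runSeq_of_not_mem (τ : V → ℕ → Instr V) {x : V} {γ : List V}
    (hx : x ∉ γ) {s : (V → SiteState) × (V → ℕ)} (h : 2 ≤ (s.1 x).rank) :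
    2 ≤ ((runSeq τ γ s).1 x).rank := by
  induction γ generalizing s with
  | nil => exact h
  | cons y γ ih =>
      rw [List.mem_cons, not_or] at hx
      exact ih hx.2 (two_le_rank_applyInstr_of_ne hx.1 _ h)

namespace LegalSeq

variable {τ : V → ℕ → Instr V}

lemma move_to_front {x : V} {γ δ : List V} (hxγ : x ∉ γ)
    {s : (V → SiteState) × (V → ℕ)} (hx : 2 ≤ (s.1 x).rank) (h : LegalSeq τ (γ ++ x :: δ) s) :
    LegalSeq τ (γ ++ δ) (topple τ x s) ∧
      runSeq τ (γ ++ x :: δ) s = runSeq τ (γ ++ δ) (topple τ x s) := by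
  induction γ generalizing s with
  | nil => exact ⟨h.2, rfl⟩
  | cons y γ ih =>
      rw [List.mem_cons, not_or] at hxγ
      obtain ⟨hy, hrest⟩ := h
      obtain ⟨hlegal, hrun⟩ := ih hxγ.2 (two_le_rank_applyInstr_of_ne hxγ.1 _ hx) hrest
      have hcomm := topple_comm τ hxγ.1 hx hy
      refine ⟨⟨two_le_rank_applyInstr_of_ne (Ne.symm hxγ.1) _ hy, ?_⟩, ?_⟩
      · rw [hcomm]; exact hlegal
      · exact hrun.trans (congrArg (runSeq τ (γ ++ δ)) hcomm.symm)

lemma subperm_of_stableIn {U : Set V} {α β : List V} {s : (V → SiteState) × (V → ℕ)}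
    (hα : LegalSeq τ α s) (hβ : LegalSeq τ β s) (hαU : ∀ y ∈ α, y ∈ U)
    (hβs : StableIn U (runSeq τ β s).1) : α.Subperm β := by
  induction α generalizing β s with
  | nil => exact List.nil_subperm
  | cons z α ih =>
      obtain ⟨hz, hα⟩ := hα
      have hzβ : z ∈ β := by
        by_contra hzβ
        have hstable := hβs z (hαU z List.mem_cons_self)
        have hunstable := two_le_rank_runSeq_of_not_mem τ hzβ hz
        omega
      obtain ⟨γ, δ, hzγ, rfl, -⟩ := List.exists_erase_eq hzβ
      obtain ⟨hlegal, hrun⟩ := hβ.move_to_front hzγ hz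
      have hsub := ih hα hlegal (fun y hy => hαU y (List.mem_cons_of_mem _ hy)) (hrun ▸ hβs)
      exact ((List.subperm_cons z).mpr hsub).trans List.perm_middle.symm.subperm

lemma runSeq_eq_of_perm {α β : List V} {s : (V → SiteState) × (V → ℕ)}
    (hα : LegalSeq τ α s) (hβ : LegalSeq τ β s) (hαβ : α.Perm β) :
    runSeq τ α s = runSeq τ β s := by
  induction α generalizing β s with
  | nil => rw [List.nil_perm.mp hαβ]
  | cons z α ih =>
      obtain ⟨hz, hα⟩ := hα
      obtain ⟨γ, δ, hzγ, rfl, -⟩ := List.exists_erase_eq (hαβ.subset List.mem_cons_self)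
      obtain ⟨hlegal, hrun⟩ := hβ.move_to_front hzγ hz
      rw [hrun]
      exact ih hα hlegal (hαβ.trans List.perm_middle).cons_inv

end LegalSeq

/-- The Abelian property of the Diaconis–Fulton representation: if `α` and `β` are
two legal toppling sequences contained in a finite set `U` that both stabilize the
configuration `η` in `U`, then they topple each site the same number of times and
produce the same final configuration. -/
theorem stmt15 {V : Type*} [DecidableEq V] (τ : V → ℕ → Instr V) (U : Finset V)
    (η : V → SiteState) (α β : List V)
    (hαU : ∀ y ∈ α, y ∈ U) (hβU : ∀ y ∈ β, y ∈ U)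
    (hα : LegalSeq τ α (η, fun _ => 0)) (hβ : LegalSeq τ β (η, fun _ => 0))
    (hαs : StableIn (↑U) (runSeq τ α (η, fun _ => 0)).1)
    (hβs : StableIn (↑U) (runSeq τ β (η, fun _ => 0)).1) :
    (∀ x : V, α.count x = β.count x) ∧
      (runSeq τ α (η, fun _ => 0)).1 = (runSeq τ β (η, fun _ => 0)).1 := by
  have hperm : α.Perm β :=
    (hα.subperm_of_stableIn hβ hαU hβs).antisymm (hβ.subperm_of_stableIn hα hβU hαs)
  exact ⟨fun x => hperm.count_eq x, by rw [hα.runSeq_eq_of_perm hβ hperm]⟩
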